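/- For an arbitrary weight function v : 𝒳 → 𝒜 → ℝ, under the independence of potential rewards condition and the click–reward factorization condition, the expectation over one logged sample of the weighted click-reward sum marginalizes to the logging-policy click probabilities: E_{x∼p, A∼π₀(x), ω∼κ(x,A)}[ ∑_{a∈𝒜} v(x,a)·C(ω,a)·R(ω,a) ] = E_{x∼p}[ ∑_{a∈𝒜} v(x,a)·p_c(x,a,π₀)·q_r(x,a) ]. -/

import Mathlib

/-! Conditioning on `(x, A)`, the factorization turns the inner expectation of `C · R` into
`p_c(x, a, A) · q_r(x, a)`; since `q_r` does not depend on `A`, averaging over `A ∼ π₀(x)`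
only acts on the click probability, which becomes `p_c(x, a, π₀)`. -/

open scoped BigOperators Classical

/-- Expectation of a real-valued function under a PMF on a finite type. -/
noncomputable def pexp {X : Type*} [Fintype X] (p : PMF X) (f : X → ℝ) : ℝ :=
  ∑ x, (p x).toReal * f x

/-- Variance of a real-valued function under a PMF on a finite type. -/
noncomputable def pvar {X : Type*} [Fintype X] (p : PMF X) (f : X → ℝ) : ℝ :=
  pexp p (fun x => (f x - pexp p f) ^ 2)

/-- Joint distribution of one logged sample (x, A, ω) with x ∼ p, A ∼ π₀(x), ω ∼ κ(x,A). -/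
noncomputable def logged {𝒳 ℛ Ω : Type*} (p : PMF 𝒳) (π₀ : 𝒳 → PMF ℛ)
    (κ : 𝒳 → ℛ → PMF Ω) : PMF (𝒳 × ℛ × Ω) :=
  p.bind fun x => (π₀ x).bind fun A => (κ x A).map fun ω => (x, A, ω)

/-- Click probability of action a at context x given ranking A: p_c(x,a,A). -/
noncomputable def pcA {𝒳 ℛ Ω 𝒜 : Type*} [Fintype Ω]
    (κ : 𝒳 → ℛ → PMF Ω) (C : Ω → 𝒜 → ℝ) (x : 𝒳) (a : 𝒜) (A : ℛ) : ℝ :=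
  pexp (κ x A) fun ω => C ω a

/-- Marginalized click probability of action a at context x under policy μ: p_c(x,a,μ). -/
noncomputable def pcPol {𝒳 ℛ Ω 𝒜 : Type*} [Fintype Ω] [Fintype ℛ]
    (κ : 𝒳 → ℛ → PMF Ω) (C : Ω → 𝒜 → ℝ) (μ : 𝒳 → PMF ℛ) (x : 𝒳) (a : 𝒜) : ℝ :=
  pexp (μ x) fun A => pcA κ C x a A

/-- Policy value V(π). -/
noncomputable def polValue {𝒳 ℛ Ω 𝒜 : Type*} [Fintype 𝒳] [Fintype ℛ] [Fintype Ω] [Fintype 𝒜]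
    (p : PMF 𝒳) (π : 𝒳 → PMF ℛ) (κ : 𝒳 → ℛ → PMF Ω) (C R : Ω → 𝒜 → ℝ) : ℝ :=
  pexp p fun x => pexp (π x) fun A => pexp (κ x A) fun ω => ∑ a, C ω a * R ω a

section Expectation

variable {X Y : Type*} [Fintype X]

theorem pexp_const_mul (p : PMF X) (c : ℝ) (f : X → ℝ) :
    pexp p (fun x => c * f x) = c * pexp p f := by
  simp only [pexp, Finset.mul_sum, mul_left_comm]

theorem pexp_mul_const (p : PMF X) (f : X → ℝ) (c : ℝ) :
    pexp p (fun x => f x * c) = pexp p f * c := by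
  simp only [pexp, Finset.sum_mul, mul_assoc]

theorem pexp_finset_sum {ι : Type*} (s : Finset ι) (p : PMF X) (f : ι → X → ℝ) :
    pexp p (fun x => ∑ i ∈ s, f i x) = ∑ i ∈ s, pexp p (f i) := by
  simp only [pexp, Finset.mul_sum]
  exact Finset.sum_comm

theorem pexp_pure (a : X) (f : X → ℝ) : pexp (PMF.pure a) f = f a := by
  rw [pexp, Finset.sum_eq_single a (fun b _ hb => by simp [PMF.pure_apply, hb]) (by simp)]
  simp

theorem toReal_bind_apply [Fintype Y] (p : PMF X) (q : X → PMF Y) (y : Y) :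
    (p.bind q y).toReal = ∑ x, (p x).toReal * (q x y).toReal := by
  rw [PMF.bind_apply, tsum_fintype, ENNReal.toReal_sum fun x _ =>
    ENNReal.mul_ne_top (p.apply_ne_top x) ((q x).apply_ne_top y)]
  simp only [ENNReal.toReal_mul]

theorem pexp_bind [Fintype Y] (p : PMF X) (q : X → PMF Y) (f : Y → ℝ) :
    pexp (p.bind q) f = pexp p fun x => pexp (q x) f := by
  simp only [pexp, toReal_bind_apply, Finset.sum_mul, Finset.mul_sum, mul_assoc]
  exact Finset.sum_comm

theorem pexp_map [Fintype Y] (p : PMF X) (g : X → Y) (f : Y → ℝ) :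
    pexp (p.map g) f = pexp p (f ∘ g) := by
  simp only [PMF.map, pexp_bind, Function.comp_apply, pexp_pure]
  rfl

end Expectation

theorem pexp_logged {𝒳 ℛ Ω : Type*} [Fintype 𝒳] [Fintype ℛ] [Fintype Ω]
    (p : PMF 𝒳) (π₀ : 𝒳 → PMF ℛ) (κ : 𝒳 → ℛ → PMF Ω) (f : 𝒳 × ℛ × Ω → ℝ) :
    pexp (logged p π₀ κ) f =
      pexp p fun x => pexp (π₀ x) fun A => pexp (κ x A) fun ω => f (x, A, ω) := by
  simp only [logged, pexp_bind, pexp_map, Function.comp_def]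

theorem weighted_sum_marginalizes_general {𝒳 ℛ Ω 𝒜 : Type*}
    [Fintype 𝒳] [Fintype ℛ] [Fintype Ω] [Fintype 𝒜]
    (p : PMF 𝒳) (π₀ : 𝒳 → PMF ℛ) (κ : 𝒳 → ℛ → PMF Ω)
    (C R : Ω → 𝒜 → ℝ)
    (q_r : 𝒳 → 𝒜 → ℝ)
    (hfact : ∀ x a A,
      pexp (κ x A) (fun ω => C ω a * R ω a) = pcA κ C x a A * q_r x a)
    (v : 𝒳 → 𝒜 → ℝ) :
    pexp (logged p π₀ κ)
        (fun s => ∑ a, v s.1 a * C s.2.2 a * R s.2.2 a)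
    = pexp p (fun x => ∑ a, v x a * pcPol κ C π₀ x a * q_r x a) := by
  rw [pexp_logged]
  congr 1 with x
  have inner : ∀ A, (pexp (κ x A) fun ω => ∑ a, v x a * C ω a * R ω a)
      = ∑ a, v x a * (pcA κ C x a A * q_r x a) := fun A => by
    simp only [mul_assoc, pexp_finset_sum, pexp_const_mul, hfact]
  simp only [inner, pexp_finset_sum, pexp_const_mul, pexp_mul_const, pcPol]
  simp only [mul_assoc]

/-- For an arbitrary weight function v, the logged-sample expectation of the weighted
click-reward sum marginalizes to the logging-policy click probabilities. -/
theorem weighted_sum_marginalizes {𝒳 ℛ Ω 𝒜 : Type*}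
    [Fintype 𝒳] [Nonempty 𝒳] [Fintype ℛ] [Nonempty ℛ] [Fintype Ω] [Nonempty Ω] [Fintype 𝒜]
    (p : PMF 𝒳) (π π₀ : 𝒳 → PMF ℛ) (κ : 𝒳 → ℛ → PMF Ω)
    (C R : Ω → 𝒜 → ℝ) (hC : ∀ ω a, C ω a = 0 ∨ C ω a = 1)
    (q_r : 𝒳 → 𝒜 → ℝ)
    (hind : ∀ x a A, pexp (κ x A) (fun ω => R ω a) = q_r x a)
    (hfact : ∀ x a A,
      pexp (κ x A) (fun ω => C ω a * R ω a) = pcA κ C x a A * q_r x a)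
    (v : 𝒳 → 𝒜 → ℝ) :
    pexp (logged p π₀ κ)
        (fun s => ∑ a, v s.1 a * C s.2.2 a * R s.2.2 a)
    = pexp p (fun x => ∑ a, v x a * pcPol κ C π₀ x a * q_r x a) :=
  weighted_sum_marginalizes_general p π₀ κ C R q_r hfact v
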